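/- Let G be a toroidal grid diagram of size n representing a knot. Then the Alexander and Maslov gradings of the canonical generator x^LL satisfy A(x^LL) = (1/2)·M(x^LL). -/

import Mathlib

open Finset

noncomputable section

open scoped Classical

/-- A formal rational-coefficient combination of points in the plane. -/
abbrev PtComb := (ℝ × ℝ) →₀ ℚ

/-- `I(A,B)`: the number of pairs `(a, b) ∈ A × B` with `a₁ < b₁` and `a₂ < b₂`,
extended bilinearly to formal combinations of finite point sets. -/
def Ifun (f g : PtComb) : ℚ :=
  ∑ p ∈ f.support, ∑ q ∈ g.support,
    if p.1 < q.1 ∧ p.2 < q.2 then f p * g q else 0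

/-- `J(A,B) = (I(A,B) + I(B,A))/2`. -/
def Jfun (f g : PtComb) : ℚ := (Ifun f g + Ifun g f) / 2

/-- A toroidal grid diagram of size `n`: a pair of permutations `σX`, `σO` of
`{0, …, n-1}` with `σX i ≠ σO i` for all `i`. -/
structure Grid (n : ℕ) where
  σX : Equiv.Perm (Fin n)
  σO : Equiv.Perm (Fin n)
  disj : ∀ i, σX i ≠ σO i

namespace Grid

variable {n : ℕ}

/-- `G` represents a knot: the permutation `σO⁻¹ ∘ σX` has a single orbit,
i.e. it is an `n`-cycle. -/
def RepKnot (G : Grid n) : Prop :=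
  ∀ i j : Fin n, ∃ k : ℕ, ((G.σO⁻¹ * G.σX) ^ k) i = j

/-- The `X`-marking of column `i`, at the planar point `(i + 1/2, σX i + 1/2)`. -/
def Xpt (G : Grid n) (i : Fin n) : ℝ × ℝ :=
  (((i : ℕ) : ℝ) + 1/2, ((G.σX i : ℕ) : ℝ) + 1/2)

/-- The `O`-marking of column `i`, at the planar point `(i + 1/2, σO i + 1/2)`. -/
def Opt (G : Grid n) (i : Fin n) : ℝ × ℝ :=
  (((i : ℕ) : ℝ) + 1/2, ((G.σO i : ℕ) : ℝ) + 1/2)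

/-- The set `𝕏` of `X`-markings, as a formal point combination. -/
def XX (G : Grid n) : PtComb := ∑ i : Fin n, Finsupp.single (G.Xpt i) 1

/-- The set `𝕆` of `O`-markings, as a formal point combination. -/
def OO (G : Grid n) : PtComb := ∑ i : Fin n, Finsupp.single (G.Opt i) 1

/-- The point set `{(i, x i)}` of a generator `x`, as a formal point combination. -/
def pts (x : Equiv.Perm (Fin n)) : PtComb :=
  ∑ i : Fin n, Finsupp.single (((i : ℕ) : ℝ), ((x i : ℕ) : ℝ)) 1

/-- The Maslov grading `M(x) = J(x − 𝕆, x − 𝕆) + 1`. -/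
def M (G : Grid n) (x : Equiv.Perm (Fin n)) : ℚ :=
  Jfun (pts x - G.OO) (pts x - G.OO) + 1

/-- The `X`-Maslov grading `M_𝕏(x) = J(x − 𝕏, x − 𝕏) + 1`. -/
def MX (G : Grid n) (x : Equiv.Perm (Fin n)) : ℚ :=
  Jfun (pts x - G.XX) (pts x - G.XX) + 1

/-- The Alexander grading `A(x) = J(x − (𝕏+𝕆)/2, 𝕏 − 𝕆) − (n−1)/2`. -/
def A (G : Grid n) (x : Equiv.Perm (Fin n)) : ℚ :=
  Jfun (pts x - (2 : ℚ)⁻¹ • (G.XX + G.OO)) (G.XX - G.OO) - ((n : ℚ) - 1) / 2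

/-- The canonical generator `x^LL`, whose points are the lower-left corners of the
`X`-marked squares. -/
def xLL (G : Grid n) : Equiv.Perm (Fin n) := G.σX

/-- The canonical generator `x^UR`, `x^UR(i) = σX((i−1) mod n) + 1 (mod n)`, whose points
are the upper-right corners of the `X`-marked squares (reduced mod `n`). -/
def xUR [NeZero n] (G : Grid n) : Equiv.Perm (Fin n) where
  toFun i := G.σX (i - 1) + 1
  invFun i := G.σX.symm (i - 1) + 1
  left_inv i := by simp
  right_inv i := by simp

end Grid



lemma Ifun_eq_sum {f g : PtComb} {s t : Finset (ℝ × ℝ)}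
    (hs : f.support ⊆ s) (ht : g.support ⊆ t) :
    Ifun f g = ∑ p ∈ s, ∑ q ∈ t, if p.1 < q.1 ∧ p.2 < q.2 then f p * g q else 0 := by
  have h1 : ∀ p : ℝ × ℝ, ∑ q ∈ g.support, (if p.1 < q.1 ∧ p.2 < q.2 then f p * g q else 0)
      = ∑ q ∈ t, (if p.1 < q.1 ∧ p.2 < q.2 then f p * g q else 0) := fun p =>
    Finset.sum_subset ht fun q _ hq => by
      rw [Finsupp.notMem_support_iff.mp hq, mul_zero, ite_self]
  unfold Ifun
  simp_rw [h1]
  exact Finset.sum_subset hs fun p _ hp => by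
    rw [Finsupp.notMem_support_iff.mp hp]
    simp

lemma Ifun_add_left (f f' g : PtComb) : Ifun (f + f') g = Ifun f g + Ifun f' g := by
  rw [Ifun_eq_sum (s := f.support ∪ f'.support) (t := g.support) (Finsupp.support_add) le_rfl,
    Ifun_eq_sum (s := f.support ∪ f'.support) (t := g.support) Finset.subset_union_left le_rfl,
    Ifun_eq_sum (s := f.support ∪ f'.support) (t := g.support) Finset.subset_union_right le_rfl,
    ← Finset.sum_add_distrib]
  refine Finset.sum_congr rfl fun p _ => ?_
  rw [← Finset.sum_add_distrib]
  refine Finset.sum_congr rfl fun q _ => ?_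
  rw [Finsupp.add_apply]
  split <;> ring

lemma Ifun_add_right (f g g' : PtComb) : Ifun f (g + g') = Ifun f g + Ifun f g' := by
  rw [Ifun_eq_sum (s := f.support) (t := g.support ∪ g'.support) le_rfl Finsupp.support_add,
    Ifun_eq_sum (s := f.support) (t := g.support ∪ g'.support) le_rfl Finset.subset_union_left,
    Ifun_eq_sum (s := f.support) (t := g.support ∪ g'.support) le_rfl Finset.subset_union_right,
    ← Finset.sum_add_distrib]
  refine Finset.sum_congr rfl fun p _ => ?_
  rw [← Finset.sum_add_distrib]
  refine Finset.sum_congr rfl fun q _ => ?_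
  rw [Finsupp.add_apply]
  split <;> ring

lemma Ifun_smul_left (c : ℚ) (f g : PtComb) : Ifun (c • f) g = c * Ifun f g := by
  rw [Ifun_eq_sum (s := f.support) (t := g.support) Finsupp.support_smul le_rfl,
    Ifun, Finset.mul_sum]
  refine Finset.sum_congr rfl fun p _ => ?_
  rw [Finset.mul_sum]
  refine Finset.sum_congr rfl fun q _ => ?_
  rw [Finsupp.smul_apply, smul_eq_mul]
  split <;> ring

lemma Ifun_smul_right (c : ℚ) (f g : PtComb) : Ifun f (c • g) = c * Ifun f g := by
  rw [Ifun_eq_sum (s := f.support) (t := g.support) le_rfl Finsupp.support_smul,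
    Ifun, Finset.mul_sum]
  refine Finset.sum_congr rfl fun p _ => ?_
  rw [Finset.mul_sum]
  refine Finset.sum_congr rfl fun q _ => ?_
  rw [Finsupp.smul_apply, smul_eq_mul]
  split <;> ring

lemma Ifun_neg_left (f g : PtComb) : Ifun (-f) g = -Ifun f g := by
  rw [← neg_one_smul ℚ f, Ifun_smul_left]; ring

lemma Ifun_neg_right (f g : PtComb) : Ifun f (-g) = -Ifun f g := by
  rw [← neg_one_smul ℚ g, Ifun_smul_right]; ring

lemma Ifun_sub_left (f f' g : PtComb) : Ifun (f - f') g = Ifun f g - Ifun f' g := by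
  rw [sub_eq_add_neg, Ifun_add_left, Ifun_neg_left]; ring

lemma Ifun_sub_right (f g g' : PtComb) : Ifun f (g - g') = Ifun f g - Ifun f g' := by
  rw [sub_eq_add_neg, Ifun_add_right, Ifun_neg_right]; ring

lemma Ifun_zero_left (g : PtComb) : Ifun 0 g = 0 := by simp [Ifun]

lemma Ifun_zero_right (f : PtComb) : Ifun f 0 = 0 := by simp [Ifun]

lemma Jfun_key (f X O : PtComb) :
    Jfun (f - (2 : ℚ)⁻¹ • (X + O)) (X - O)
      = (Jfun (f - O) (f - O) - Jfun (f - X) (f - X)) / 2 := by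
  simp only [Jfun, Ifun_sub_left, Ifun_sub_right, Ifun_add_left, Ifun_add_right,
    Ifun_smul_left, Ifun_smul_right]
  ring


lemma Ifun_sum_left {ι : Type*} (s : Finset ι) (f : ι → PtComb) (g : PtComb) :
    Ifun (∑ i ∈ s, f i) g = ∑ i ∈ s, Ifun (f i) g := by
  induction s using Finset.induction_on with
  | empty => simp [Ifun_zero_left]
  | insert _ _ h ih => rw [Finset.sum_insert h, Finset.sum_insert h, Ifun_add_left, ih]

lemma Ifun_sum_right {ι : Type*} (s : Finset ι) (f : PtComb) (g : ι → PtComb) :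
    Ifun f (∑ i ∈ s, g i) = ∑ i ∈ s, Ifun f (g i) := by
  induction s using Finset.induction_on with
  | empty => simp [Ifun_zero_right]
  | insert _ _ h ih => rw [Finset.sum_insert h, Finset.sum_insert h, Ifun_add_right, ih]

lemma Ifun_single (p q : ℝ × ℝ) :
    Ifun (Finsupp.single p (1:ℚ)) (Finsupp.single q (1:ℚ))
      = if p.1 < q.1 ∧ p.2 < q.2 then 1 else 0 := by
  unfold Ifun
  rw [Finsupp.support_single_ne_zero _ one_ne_zero,
    Finsupp.support_single_ne_zero _ one_ne_zero]
  simp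

lemma nat_cast_lt_add_half {a b : ℕ} : (a : ℝ) < (b : ℝ) + 1/2 ↔ a ≤ b := by
  constructor
  · intro h
    by_contra hb
    push_neg at hb
    have : (b : ℝ) + 1 ≤ a := by exact_mod_cast hb
    linarith
  · intro h
    have : (a : ℝ) ≤ b := by exact_mod_cast h
    linarith

lemma nat_cast_add_half_lt {a b : ℕ} : (a : ℝ) + 1/2 < (b : ℝ) ↔ a < b := by
  constructor
  · intro h
    have : (a : ℝ) < b := by linarith
    exact_mod_cast this
  · intro h
    have : (a : ℝ) + 1 ≤ b := by exact_mod_cast h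
    linarith


namespace Grid

variable {n : ℕ}

def cX (G : Grid n) : ℚ :=
  ∑ i : Fin n, ∑ j : Fin n,
    if (i : ℕ) < (j : ℕ) ∧ (G.σX i : ℕ) < (G.σX j : ℕ) then 1 else 0

lemma Ifun_pts_pts (G : Grid n) : Ifun (pts G.σX) (pts G.σX) = G.cX := by
  unfold pts cX
  rw [Ifun_sum_left]
  refine Finset.sum_congr rfl fun i _ => ?_
  rw [Ifun_sum_right]
  refine Finset.sum_congr rfl fun j _ => ?_
  rw [Ifun_single]
  simp only [Nat.cast_lt]

lemma Ifun_XX_XX (G : Grid n) : Ifun G.XX G.XX = G.cX := by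
  unfold XX cX Xpt
  rw [Ifun_sum_left]
  refine Finset.sum_congr rfl fun i _ => ?_
  rw [Ifun_sum_right]
  refine Finset.sum_congr rfl fun j _ => ?_
  rw [Ifun_single]
  simp only [add_lt_add_iff_right, Nat.cast_lt]

lemma Ifun_XX_pts (G : Grid n) : Ifun G.XX (pts G.σX) = G.cX := by
  unfold XX pts cX Xpt
  rw [Ifun_sum_left]
  refine Finset.sum_congr rfl fun i _ => ?_
  rw [Ifun_sum_right]
  refine Finset.sum_congr rfl fun j _ => ?_
  rw [Ifun_single]
  simp only [nat_cast_add_half_lt]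

lemma Ifun_pts_XX (G : Grid n) : Ifun (pts G.σX) G.XX = G.cX + n := by
  unfold XX pts cX Xpt
  rw [Ifun_sum_left]
  simp_rw [Ifun_sum_right, Ifun_single]
  have key : ∀ i j : Fin n,
      (if (((i:ℕ):ℝ), ((G.σX i : ℕ):ℝ)).1 < (((j:ℕ):ℝ) + 1/2, ((G.σX j : ℕ):ℝ) + 1/2).1 ∧
          (((i:ℕ):ℝ), ((G.σX i : ℕ):ℝ)).2 < (((j:ℕ):ℝ) + 1/2, ((G.σX j : ℕ):ℝ) + 1/2).2
        then (1:ℚ) else 0)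
      = (if (i:ℕ) < (j:ℕ) ∧ (G.σX i : ℕ) < (G.σX j : ℕ) then (1:ℚ) else 0)
        + (if i = j then (1:ℚ) else 0) := by
    intro i j
    simp only [nat_cast_lt_add_half]
    by_cases hij : i = j
    · subst hij
      simp [lt_irrefl]
    · rw [if_neg hij, add_zero]
      refine if_congr ?_ rfl rfl
      constructor
      · rintro ⟨h1, h2⟩
        refine ⟨lt_of_le_of_ne h1 fun h => hij (Fin.ext h),
          lt_of_le_of_ne h2 fun h => hij (G.σX.injective (Fin.ext h))⟩
      · rintro ⟨h1, h2⟩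
        exact ⟨h1.le, h2.le⟩
  simp_rw [key, Finset.sum_add_distrib]
  congr 1
  simp [Finset.sum_ite_eq]

end Grid

/-- For a toroidal grid diagram `G` of size `n` representing a knot,
the canonical generator `x^LL` satisfies `A(x^LL) = (1/2) · M(x^LL)`. -/
theorem alexander_eq_half_maslov_xLL {n : ℕ} [NeZero n] (hn : 2 ≤ n)
    (G : Grid n) (hK : G.RepKnot) :
    G.A G.xLL = (1 / 2 : ℚ) * G.M G.xLL := by
  have key := Jfun_key (Grid.pts G.xLL) G.XX G.OO
  have hMX : Jfun (Grid.pts G.xLL - G.XX) (Grid.pts G.xLL - G.XX) = -(n : ℚ) := by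
    show Jfun (Grid.pts G.σX - G.XX) (Grid.pts G.σX - G.XX) = -(n : ℚ)
    simp only [Jfun, Ifun_sub_left, Ifun_sub_right, G.Ifun_pts_pts, G.Ifun_XX_XX,
      G.Ifun_XX_pts, G.Ifun_pts_XX]
    ring
  unfold Grid.A Grid.M
  rw [key, hMX]
  ring
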